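/- arXiv:2408.03122 — 5 statements merged into one kernel-verified Lean document; each statement's English description precedes it below -/
import Mathlib

section
/- Let k ≥ r ≥ 2 and p > 1, and let ℱ be a family of r-graphs such that (1) ℱ is stable with respect to T_r(n,k), and (2) π_λ(ℱ) ≤ (k)_r/k^r. Then ℱ is spectrally stable with respect to T_r(n,k) (for this p). -/
open Finset

/-- The `p`-spectral radius of the `r`-uniform hypergraph on vertex set `Fin n`
with edge set `E`: the maximum of `r! * ∑_{e ∈ E} ∏_{v ∈ e} x v` over all
vectors `x` with `‖x‖_p = 1` (equivalently `∑ |x i| ^ p = 1`). -/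
noncomputable def specRad (r n : ℕ) (E : Finset (Finset (Fin n))) (p : ℝ) : ℝ :=
  sSup { y : ℝ | ∃ x : Fin n → ℝ, (∑ i : Fin n, |x i| ^ p) = 1 ∧
    y = (Nat.factorial r : ℝ) * ∑ e ∈ E, ∏ v ∈ e, x v }

/-- The edge set of the Turán `r`-graph `T_r(n,k)`: the complete `k`-partite
`r`-graph on `Fin n` whose parts (the residue classes modulo `k`) are as equal
as possible; its edges are all `r`-sets meeting each part in at most one vertex. -/
def turanEdges (r n k : ℕ) : Finset (Finset (Fin n)) :=
  Finset.univ.filter fun e : Finset (Fin n) =>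
    e.card = r ∧ ∀ u ∈ e, ∀ v ∈ e, u ≠ v → (u : ℕ) % k ≠ (v : ℕ) % k

/-- The `r`-graph on `Fin n` with edge set `E` is isomorphic to `T_r(n,k)`. -/
def IsoToTuran (r n k : ℕ) (E : Finset (Finset (Fin n))) : Prop :=
  ∃ σ : Equiv.Perm (Fin n),
    ∀ e : Finset (Fin n), e ∈ E ↔ e.image (fun v => σ v) ∈ turanEdges r n k

/-- The `r`-graph on `Fin n` with edge set `E` can be transformed into (a copy of)
`T_r(n,k)` by adding and deleting at most `m` edges. -/
def CloseToTuran (r n k : ℕ) (E : Finset (Finset (Fin n))) (m : ℝ) : Prop :=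
  ∃ σ : Equiv.Perm (Fin n),
    ((symmDiff E ((turanEdges r n k).image fun e => e.image fun v => σ v)).card : ℝ) ≤ m

/-- `E` contains a copy of the expanded clique `H_{k+1}^{(r)}`, the `r`-graph obtained
from `K_{k+1}` by enlarging each edge with a new set of `r - 2` vertices, the enlarging
sets being pairwise disjoint and disjoint from the core. Here `c` lists the `k+1` core
vertices and `g i j` (for `i < j`) is the edge containing the core pair `{c i, c j}`. -/
def ContainsExpandedClique (r k : ℕ) {n : ℕ} (E : Finset (Finset (Fin n))) : Prop :=
  ∃ (c : Fin (k + 1) ↪ Fin n) (g : Fin (k + 1) → Fin (k + 1) → Finset (Fin n)),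
    (∀ i j : Fin (k + 1), i < j →
      g i j ∈ E ∧ (g i j).card = r ∧
      g i j ∩ Finset.univ.image (fun i => c i) = {c i, c j}) ∧
    (∀ i j i' j' : Fin (k + 1), i < j → i' < j' → (i, j) ≠ (i', j') →
      g i j ∩ g i' j' ⊆ Finset.univ.image (fun i => c i))

/-- `E` contains a copy of the generalized fan `F_{k+1}^{(r)}`, whose edges are `[r]`
together with `E_{ij} ∪ {i,j}` over all pairs `{i,j} ∈ C([k+1],2) \ C([r],2)`, where the
`E_{ij}` are pairwise disjoint `(r-2)`-sets disjoint from the core `[k+1]`. -/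
def ContainsGenFan (r k : ℕ) {n : ℕ} (E : Finset (Finset (Fin n))) : Prop :=
  ∃ (c : Fin (k + 1) ↪ Fin n) (g : Fin (k + 1) → Fin (k + 1) → Finset (Fin n)),
    ((Finset.univ.filter fun i : Fin (k + 1) => (i : ℕ) < r).image (fun i => c i) ∈ E) ∧
    (∀ i j : Fin (k + 1), i < j → ¬((i : ℕ) < r ∧ (j : ℕ) < r) →
      g i j ∈ E ∧ (g i j).card = r ∧
      g i j ∩ Finset.univ.image (fun i => c i) = {c i, c j}) ∧
    (∀ i j i' j' : Fin (k + 1), i < j → i' < j' → (i, j) ≠ (i', j') →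
      ¬((i : ℕ) < r ∧ (j : ℕ) < r) → ¬((i' : ℕ) < r ∧ (j' : ℕ) < r) →
      g i j ∩ g i' j' ⊆ Finset.univ.image (fun i => c i))

/-- `E` contains a member of the family `𝒦_t^{(r)}` as a subgraph; equivalently,
there is a `t`-set `C` of vertices (the core) every pair of which is covered by an
edge of `E`. -/
def ContainsKFam (t : ℕ) {n : ℕ} (E : Finset (Finset (Fin n))) : Prop :=
  ∃ C : Finset (Fin n), C.card = t ∧
    ∀ u ∈ C, ∀ v ∈ C, u ≠ v → ∃ e ∈ E, u ∈ e ∧ v ∈ e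

/-- `E` contains a member of the family `ℱ_t^{(r)}` as a subgraph; equivalently,
there is a `t`-set `C` of vertices (the core) such that some edge of `E` lies entirely
inside `C` and every pair of vertices of `C` is covered by an edge of `E`. -/
def ContainsFFam (t : ℕ) {n : ℕ} (E : Finset (Finset (Fin n))) : Prop :=
  ∃ C : Finset (Fin n), C.card = t ∧ (∃ e ∈ E, e ⊆ C) ∧
    ∀ u ∈ C, ∀ v ∈ C, u ≠ v → ∃ e ∈ E, u ∈ e ∧ v ∈ e

/-- `E` contains a Berge-`K_t`: distinct core vertices `c 0, …, c (t-1)` and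
pairwise distinct edges `φ i j` (for `i < j`) with `{c i, c j} ⊆ φ i j`. -/
def ContainsBergeClique (t : ℕ) {n : ℕ} (E : Finset (Finset (Fin n))) : Prop :=
  ∃ (c : Fin t ↪ Fin n) (φ : Fin t → Fin t → Finset (Fin n)),
    (∀ i j : Fin t, i < j → φ i j ∈ E ∧ c i ∈ φ i j ∧ c j ∈ φ i j) ∧
    (∀ i j i' j' : Fin t, i < j → i' < j' → (i, j) ≠ (i', j') → φ i j ≠ φ i' j')

/-- `E` (on `Fin n`) contains a copy of the hypergraph `F` (with vertices in `ℕ`). -/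
def ContainsCopy {n : ℕ} (E : Finset (Finset (Fin n))) (F : Finset (Finset ℕ)) : Prop :=
  ∃ f : ℕ → Fin n, Set.InjOn f ↑(F.biUnion id) ∧ ∀ e ∈ F, e.image f ∈ E

/-- `E` is `𝓕`-free for the family `𝓕` of hypergraphs. -/
def FamFree {n : ℕ} (E : Finset (Finset (Fin n))) (𝓕 : Set (Finset (Finset ℕ))) : Prop :=
  ∀ F ∈ 𝓕, ¬ ContainsCopy E F

/-- The Lagrangian density `π_λ(𝓕)`: the supremum of `λ^(1)(H)` over all
`𝓕`-free `r`-graphs `H`. -/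
noncomputable def lagrangianDensity (r : ℕ) (𝓕 : Set (Finset (Finset ℕ))) : ℝ :=
  sSup { y : ℝ | ∃ (m : ℕ) (E : Finset (Finset (Fin m))),
    (∀ e ∈ E, e.card = r) ∧ FamFree E 𝓕 ∧ y = specRad r m E 1 }

/-- The family `𝓕` of `r`-graphs is (edge-)stable with respect to `T_r(n,k)`. -/
def StableFamily (r k : ℕ) (𝓕 : Set (Finset (Finset ℕ))) : Prop :=
  ∀ ε : ℝ, 0 < ε → ∃ δ : ℝ, 0 < δ ∧ ∃ n₀ : ℕ, ∀ n : ℕ, n₀ ≤ n →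
    ∀ E : Finset (Finset (Fin n)), (∀ e ∈ E, e.card = r) → FamFree E 𝓕 →
    (1 - δ) * ((Nat.descFactorial k r : ℝ) / (k : ℝ) ^ r) * (n.choose r : ℝ) ≤ (E.card : ℝ) →
    CloseToTuran r n k E (ε * (n.choose r : ℝ))

/-- The family `𝓕` of `r`-graphs is spectrally stable with respect to `T_r(n,k)`,
for the given `p`. -/
def SpectrallyStableFamily (p : ℝ) (r k : ℕ) (𝓕 : Set (Finset (Finset ℕ))) : Prop :=
  ∀ ε : ℝ, 0 < ε → ∃ δ : ℝ, 0 < δ ∧ ∃ n₀ : ℕ, ∀ n : ℕ, n₀ ≤ n →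
    ∀ E : Finset (Finset (Fin n)), (∀ e ∈ E, e.card = r) → FamFree E 𝓕 →
    (1 - δ) * ((Nat.descFactorial k r : ℝ) / (k : ℝ) ^ r) * (n : ℝ) ^ ((r : ℝ) * (1 - 1 / p))
      < specRad r n E p →
    CloseToTuran r n k E (ε * (n.choose r : ℝ))

/-- The codegree of `u` and `v`: the number of edges containing both. -/
def codeg {n : ℕ} (E : Finset (Finset (Fin n))) (u v : Fin n) : ℕ :=
  (E.filter fun e => u ∈ e ∧ v ∈ e).card

/-- For a partition of `Fin n` into `k` parts given by `P : Fin n → Fin k`,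
`partWeight E P = ∑_{e ∈ E} #{i : e ∩ V_i ≠ ∅}`. -/
def partWeight {n k : ℕ} (E : Finset (Finset (Fin n))) (P : Fin n → Fin k) : ℕ :=
  ∑ e ∈ E, (e.image P).card

/-! For `‖x‖_p = 1` the vector `(|x_v|^p)_v` is a unit vector in `ℓ¹`, so the
Lagrangian density bounds `r! ∑_e ∏_{v ∈ e} |x_v|^p` by `c = (k)_r / k^r`, and Hölder's
inequality over the edges gives `λ^(p)(H) ≤ c^(1/p) (r! e(H))^(1 - 1/p)`. A spectral radius close
to `c n^(r(1-1/p))` therefore forces `e(H)` close to `c n^r / r! ≥ c C(n,r)`, and edge stability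
applies. -/

theorem Multiset.countPerms_of_nodup {α : Type*} [DecidableEq α] {m : Multiset α}
    (hm : m.Nodup) : m.countPerms = m.card.factorial := by
  have hcount : ∀ a ∈ m.toFinset, m.toFinsupp a = 1 := fun a ha => by
    rw [Multiset.toFinsupp_apply, Multiset.count_eq_one_of_mem hm (Multiset.mem_toFinset.1 ha)]
  have := Nat.multinomial_spec m.toFinset m.toFinsupp
  rw [prod_congr rfl fun a ha => by rw [hcount a ha], sum_congr rfl hcount] at this
  rw [Multiset.countPerms, Finsupp.multinomial_eq, Multiset.toFinsupp_support]
  simpa [Multiset.toFinset_card_of_nodup hm] using this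

/-- The `r`-sets of `s` are the squarefree terms of the multinomial expansion of
`(∑_{i ∈ s} x_i)^r`, each occurring with coefficient `r!`. -/
theorem Finset.factorial_mul_sum_powersetCard_prod_le_pow {ι : Type*} [DecidableEq ι]
    (s : Finset ι) (x : ι → ℝ) (hx : ∀ i ∈ s, 0 ≤ x i) (r : ℕ) :
    r.factorial * ∑ A ∈ s.powersetCard r, ∏ v ∈ A, x v ≤ (∑ i ∈ s, x i) ^ r := by
  have hterm : ∀ k ∈ s.sym r,
      0 ≤ ((k : Multiset ι).countPerms : ℝ) * ((k : Multiset ι).map x).prod :=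
    fun k hk => mul_nonneg (Nat.cast_nonneg _) (Multiset.prod_nonneg fun a ha => by
      obtain ⟨i, hi, rfl⟩ := Multiset.mem_map.1 ha
      exact hx i (mem_sym_iff.1 hk i hi))
  rw [Finset.sum_pow, mul_sum]
  refine le_trans (le_of_eq ?_) (sum_le_sum_of_subset_of_nonneg
    (filter_subset (fun k : Sym ι r => (k : Multiset ι).Nodup) _) fun k hk _ => hterm k hk)
  refine sum_bij (fun A hA => Sym.mk A.val (mem_powersetCard.1 hA).2) ?_ ?_ ?_ ?_
  · intro A hA
    rw [mem_filter, mem_sym_iff]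
    exact ⟨fun a ha => (mem_powersetCard.1 hA).1 ha, A.nodup⟩
  · intro A _ B _ h
    exact Finset.val_injective (congrArg Subtype.val h)
  · intro k hk
    rw [mem_filter, mem_sym_iff] at hk
    exact ⟨⟨k, hk.2⟩, mem_powersetCard.2 ⟨fun a ha => hk.1 a ha, k.2⟩, rfl⟩
  · intro A hA
    simp [Multiset.countPerms_of_nodup A.nodup, (mem_powersetCard.1 hA).2]

section SpectralRadius

variable {r n : ℕ} {E : Finset (Finset (Fin n))}

theorem factorial_mul_sum_prod_le_pow_sum (hE : ∀ e ∈ E, e.card = r) (x : Fin n → ℝ)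
    (hx : ∀ i, 0 ≤ x i) :
    r.factorial * ∑ e ∈ E, ∏ v ∈ e, x v ≤ (∑ i, x i) ^ r := by
  have hsub : E ⊆ univ.powersetCard r := fun e he =>
    mem_powersetCard.2 ⟨subset_univ e, hE e he⟩
  calc (r.factorial : ℝ) * ∑ e ∈ E, ∏ v ∈ e, x v
      ≤ r.factorial * ∑ A ∈ univ.powersetCard r, ∏ v ∈ A, x v := by
        refine mul_le_mul_of_nonneg_left ?_ (Nat.cast_nonneg _)
        exact sum_le_sum_of_subset_of_nonneg hsub fun A _ _ => prod_nonneg fun v _ => hx v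
    _ ≤ (∑ i, x i) ^ r := univ.factorial_mul_sum_powersetCard_prod_le_pow x (fun i _ => hx i) r

theorem sum_prod_le_sum_prod_abs (x : Fin n → ℝ) :
    ∑ e ∈ E, ∏ v ∈ e, x v ≤ ∑ e ∈ E, ∏ v ∈ e, |x v| :=
  sum_le_sum fun e _ => (le_abs_self _).trans_eq (abs_prod e x)

theorem factorial_mul_sum_prod_le_one (hE : ∀ e ∈ E, e.card = r) (x : Fin n → ℝ)
    (hx : ∑ i, |x i| = 1) :
    r.factorial * ∑ e ∈ E, ∏ v ∈ e, x v ≤ 1 :=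
  calc (r.factorial : ℝ) * ∑ e ∈ E, ∏ v ∈ e, x v
      ≤ r.factorial * ∑ e ∈ E, ∏ v ∈ e, |x v| :=
        mul_le_mul_of_nonneg_left (sum_prod_le_sum_prod_abs x) (Nat.cast_nonneg _)
    _ ≤ (∑ i, |x i|) ^ r := factorial_mul_sum_prod_le_pow_sum hE _ fun i => abs_nonneg _
    _ = 1 := by rw [hx, one_pow]

theorem one_mem_upperBounds_specRad_one_set (hE : ∀ e ∈ E, e.card = r) :
    1 ∈ upperBounds { y : ℝ | ∃ x : Fin n → ℝ, (∑ i : Fin n, |x i| ^ (1 : ℝ)) = 1 ∧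
      y = (Nat.factorial r : ℝ) * ∑ e ∈ E, ∏ v ∈ e, x v } := by
  rintro y ⟨x, hx, rfl⟩
  simp only [Real.rpow_one] at hx
  exact factorial_mul_sum_prod_le_one hE x hx

theorem specRad_one_le_one (hE : ∀ e ∈ E, e.card = r) : specRad r n E 1 ≤ 1 :=
  Real.sSup_le (one_mem_upperBounds_specRad_one_set hE) zero_le_one

theorem le_specRad_one (hE : ∀ e ∈ E, e.card = r) (y : Fin n → ℝ) (hy : ∀ i, 0 ≤ y i)
    (hy1 : ∑ i, y i = 1) :
    r.factorial * ∑ e ∈ E, ∏ v ∈ e, y v ≤ specRad r n E 1 := by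
  refine le_csSup ⟨1, one_mem_upperBounds_specRad_one_set hE⟩ ⟨y, ?_, rfl⟩
  simpa only [Real.rpow_one, abs_of_nonneg (hy _)] using hy1

theorem specRad_one_le_lagrangianDensity {𝓕 : Set (Finset (Finset ℕ))}
    (hE : ∀ e ∈ E, e.card = r) (hfree : FamFree E 𝓕) :
    specRad r n E 1 ≤ lagrangianDensity r 𝓕 := by
  refine le_csSup ⟨1, ?_⟩ ⟨n, E, hE, hfree, rfl⟩
  rintro y ⟨m, E', hE', -, rfl⟩
  exact specRad_one_le_one hE'

theorem specRad_le_of_specRad_one_le (hE : ∀ e ∈ E, e.card = r) {p c : ℝ} (hp : 1 ≤ p)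
    (hc : 0 ≤ c) (h1 : specRad r n E 1 ≤ c) :
    specRad r n E p ≤ (r.factorial * E.card) ^ (1 - p⁻¹) * c ^ p⁻¹ := by
  refine Real.sSup_le ?_ (by positivity)
  rintro y ⟨x, hx, rfl⟩
  have hweights : ∑ _e ∈ E, (r.factorial : ℝ) = r.factorial * E.card := by
    rw [sum_const, nsmul_eq_mul, mul_comm]
  have hlag : ∑ e ∈ E, (r.factorial : ℝ) * (∏ v ∈ e, |x v|) ^ p ≤ c := by
    rw [← mul_sum]
    simp_rw [← Real.finsetProd_rpow _ _ fun v _ => abs_nonneg (x v)]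
    exact (le_specRad_one hE (fun v => |x v| ^ p) (fun v => by positivity) hx).trans h1
  calc (r.factorial : ℝ) * ∑ e ∈ E, ∏ v ∈ e, x v
      ≤ ∑ e ∈ E, (r.factorial : ℝ) * ∏ v ∈ e, |x v| := by
        rw [← mul_sum]
        exact mul_le_mul_of_nonneg_left (sum_prod_le_sum_prod_abs x) (Nat.cast_nonneg _)
    _ ≤ (∑ _e ∈ E, (r.factorial : ℝ)) ^ (1 - p⁻¹)
          * (∑ e ∈ E, (r.factorial : ℝ) * (∏ v ∈ e, |x v|) ^ p) ^ p⁻¹ :=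
        Real.inner_le_weight_mul_Lp_of_nonneg E hp _ _ (fun _ => Nat.cast_nonneg _)
          fun e => prod_nonneg fun v _ => abs_nonneg (x v)
    _ ≤ (r.factorial * E.card) ^ (1 - p⁻¹) * c ^ p⁻¹ := by
        rw [hweights]
        gcongr

theorem mul_choose_lt_card_of_lt_specRad (hE : ∀ e ∈ E, e.card = r) {p c η : ℝ} (hp : 1 < p)
    (hc : 0 ≤ c) (hη : 0 ≤ η) (h1 : specRad r n E 1 ≤ c)
    (h : η ^ (1 - p⁻¹) * c * (n : ℝ) ^ ((r : ℝ) * (1 - 1 / p)) < specRad r n E p) :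
    η * c * n.choose r < E.card := by
  have hs : 0 < 1 - p⁻¹ := sub_pos.2 (inv_lt_one_of_one_lt₀ hp)
  have hηc : 0 ≤ η * c := mul_nonneg hη hc
  have hc_split : c = c ^ (1 - p⁻¹) * c ^ p⁻¹ := by
    rw [← Real.rpow_add' hc (by norm_num), sub_add_cancel, Real.rpow_one]
  have hlhs : η ^ (1 - p⁻¹) * c * (n : ℝ) ^ ((r : ℝ) * (1 - 1 / p))
      = (η * c * (n : ℝ) ^ r) ^ (1 - p⁻¹) * c ^ p⁻¹ := by
    rw [one_div, Real.rpow_natCast_mul (Nat.cast_nonneg n), Real.mul_rpow hηc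
      (by positivity), Real.mul_rpow hη hc]
    nth_rw 1 [hc_split]
    ring
  have hpow : (η * c * (n : ℝ) ^ r) ^ (1 - p⁻¹) < (r.factorial * E.card) ^ (1 - p⁻¹) := by
    refine lt_of_mul_lt_mul_right ?_ (Real.rpow_nonneg hc p⁻¹)
    exact hlhs ▸ h.trans_le (specRad_le_of_specRad_one_le hE hp.le hc h1)
  have hedges : η * c * (n : ℝ) ^ r < r.factorial * E.card :=
    (Real.rpow_lt_rpow_iff (mul_nonneg hηc (by positivity))
      (mul_nonneg (Nat.cast_nonneg _) (Nat.cast_nonneg _)) hs).1 hpow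
  have hchoose : (r.factorial : ℝ) * n.choose r ≤ (n : ℝ) ^ r := by
    have := (Nat.descFactorial_eq_factorial_mul_choose n r).symm.trans_le
      (Nat.descFactorial_le_pow n r)
    exact_mod_cast this
  refine lt_of_mul_lt_mul_left ?_ (Nat.cast_nonneg r.factorial)
  calc (r.factorial : ℝ) * (η * c * n.choose r)
      = η * c * (r.factorial * n.choose r) := by ring
    _ ≤ η * c * (n : ℝ) ^ r := mul_le_mul_of_nonneg_left hchoose (by positivity)
    _ < r.factorial * E.card := hedges

end SpectralRadius

theorem stable_and_lagrangian_implies_spectrallyStable_general (k r : ℕ) (p : ℝ)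
    (hp : 1 < p)
    (𝓕 : Set (Finset (Finset ℕ)))
    (hstable : StableFamily r k 𝓕)
    (hlag : lagrangianDensity r 𝓕 ≤ (Nat.descFactorial k r : ℝ) / (k : ℝ) ^ r) :
    SpectrallyStableFamily p r k 𝓕 := by
  intro ε hε
  obtain ⟨δ₀, hδ₀, n₀, hclose⟩ := hstable ε hε
  set c : ℝ := (Nat.descFactorial k r : ℝ) / (k : ℝ) ^ r
  have hc : 0 ≤ c := by positivity
  set η : ℝ := 1 - min δ₀ 1
  have hη : 0 ≤ η := sub_nonneg.2 (min_le_right _ _)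
  have hη_lt : η < 1 := sub_lt_self 1 (lt_min hδ₀ one_pos)
  have hs : 0 < 1 - p⁻¹ := sub_pos.2 (inv_lt_one_of_one_lt₀ hp)
  refine ⟨1 - η ^ (1 - p⁻¹), sub_pos.2 (Real.rpow_lt_one hη hη_lt hs), n₀, ?_⟩
  intro n hn E hE hfree hspec
  refine hclose n hn E hE hfree ?_
  rw [sub_sub_cancel] at hspec
  have hcard := mul_choose_lt_card_of_lt_specRad hE hp hc hη
    ((specRad_one_le_lagrangianDensity hE hfree).trans hlag) hspec
  calc (1 - δ₀) * c * n.choose r ≤ η * c * n.choose r := by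
        gcongr
        exact sub_le_sub_left (min_le_left δ₀ 1) 1
    _ ≤ E.card := hcard.le

/-- General criterion (Lemma 3.3): if a family `𝓕` of `r`-graphs is stable with
respect to `T_r(n,k)` and its Lagrangian density satisfies `π_λ(𝓕) ≤ (k)_r / k^r`,
then `𝓕` is spectrally stable with respect to `T_r(n,k)`. -/
theorem stable_and_lagrangian_implies_spectrallyStable (k r : ℕ) (p : ℝ)
    (hr : 2 ≤ r) (hrk : r ≤ k) (hp : 1 < p)
    (𝓕 : Set (Finset (Finset ℕ)))
    (hstable : StableFamily r k 𝓕)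
    (hlag : lagrangianDensity r 𝓕 ≤ (Nat.descFactorial k r : ℝ) / (k : ℝ) ^ r) :
    SpectrallyStableFamily p r k 𝓕 :=
  stable_and_lagrangian_implies_spectrallyStable_general k r p hp 𝓕 hstable hlag
end

section
/- Let p > 1, let ℱ be a family of r-graphs, and let H be an ℱ-free r-graph on n vertices. Then λ^(p)(H) ≤ (r!·e(H))^{1−1/p} · (π_λ(ℱ))^{1/p}. -/
open Finset

private lemma sum_prod_abs_le_three {m : ℕ} (x : Fin m → ℝ)
    (hx : ∑ i : Fin m, |x i| ^ (1 : ℝ) = 1) (E : Finset (Finset (Fin m))) :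
    ∑ e ∈ E, ∏ v ∈ e, |x v| ≤ 3 := by
  have hx' : ∑ i : Fin m, |x i| = 1 := by simpa [Real.rpow_one] using hx
  have h1 : ∑ e ∈ E, ∏ v ∈ e, |x v| ≤
      ∑ e ∈ (univ : Finset (Fin m)).powerset, ∏ v ∈ e, |x v| := by
    apply Finset.sum_le_sum_of_subset_of_nonneg
    · intro e _; exact Finset.mem_powerset.2 (Finset.subset_univ e)
    · intro e _ _; positivity
  have h2 : ∑ e ∈ (univ : Finset (Fin m)).powerset, ∏ v ∈ e, |x v|
      = ∏ i : Fin m, (|x i| + 1) := by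
    rw [Finset.prod_add]; simp
  have h3 : ∏ i : Fin m, (|x i| + 1) ≤ ∏ i : Fin m, Real.exp |x i| :=
    Finset.prod_le_prod (fun i _ => by positivity)
      (fun i _ => Real.add_one_le_exp _)
  have h4 : ∏ i : Fin m, Real.exp |x i| = Real.exp 1 := by
    rw [← Real.exp_sum, hx']
  have h5 : Real.exp 1 ≤ 3 := by
    have := Real.exp_one_lt_d9; norm_num at this ⊢; linarith
  calc ∑ e ∈ E, ∏ v ∈ e, |x v| ≤ _ := h1
    _ = _ := h2
    _ ≤ _ := h3
    _ = Real.exp 1 := h4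
    _ ≤ 3 := h5

private lemma specRad_one_elem_le (r m : ℕ) (E : Finset (Finset (Fin m))) :
    ∀ y ∈ {y : ℝ | ∃ x : Fin m → ℝ, (∑ i : Fin m, |x i| ^ (1 : ℝ)) = 1 ∧
      y = (Nat.factorial r : ℝ) * ∑ e ∈ E, ∏ v ∈ e, x v},
      y ≤ (Nat.factorial r : ℝ) * 3 := by
  rintro y ⟨x, hx, rfl⟩
  have h0 : ∑ e ∈ E, ∏ v ∈ e, x v ≤ ∑ e ∈ E, ∏ v ∈ e, |x v| :=
    Finset.sum_le_sum fun e _ =>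
      (le_abs_self _).trans (le_of_eq (Finset.abs_prod _ _))
  exact mul_le_mul_of_nonneg_left (h0.trans (sum_prod_abs_le_three x hx E))
    (by positivity)

private lemma specRad_one_nonneg (r m : ℕ) (E : Finset (Finset (Fin m))) :
    0 ≤ specRad r m E 1 := by
  rcases Nat.eq_zero_or_pos m with hm | hm
  · subst hm
    have hempty : {y : ℝ | ∃ x : Fin 0 → ℝ, (∑ i : Fin 0, |x i| ^ (1 : ℝ)) = 1 ∧
        y = (Nat.factorial r : ℝ) * ∑ e ∈ E, ∏ v ∈ e, x v} = ∅ := by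
      ext y
      simp only [Set.mem_setOf_eq, Set.mem_empty_iff_false, iff_false]
      rintro ⟨x, hx, -⟩
      simp at hx
    rw [specRad, hempty, Real.sSup_empty]
  · set x₀ : Fin m → ℝ := fun i => if i = ⟨0, hm⟩ then 1 else 0 with hx₀def
    have hx₀nonneg : ∀ i, 0 ≤ x₀ i := fun i => by
      rw [hx₀def]; dsimp only; split <;> norm_num
    have hx₀ : ∑ i : Fin m, |x₀ i| ^ (1 : ℝ) = 1 := by
      simp only [Real.rpow_one]
      rw [Finset.sum_congr rfl (fun i _ => abs_of_nonneg (hx₀nonneg i))]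
      simp [hx₀def]
    have hy₀ : (0:ℝ) ≤ (Nat.factorial r : ℝ) * ∑ e ∈ E, ∏ v ∈ e, x₀ v := by
      apply mul_nonneg (by positivity)
      exact Finset.sum_nonneg fun e _ => Finset.prod_nonneg fun v _ => hx₀nonneg v
    refine hy₀.trans ?_
    rw [specRad]
    exact le_csSup ⟨(Nat.factorial r : ℝ) * 3,
      fun y hy => specRad_one_elem_le r m E y hy⟩ ⟨x₀, hx₀, rfl⟩

private lemma specRad_one_le (r m : ℕ) (E : Finset (Finset (Fin m))) :
    specRad r m E 1 ≤ (Nat.factorial r : ℝ) * 3 := by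
  rw [specRad]
  exact Real.sSup_le (specRad_one_elem_le r m E) (by positivity)

private lemma lagrangianDensity_nonneg (r : ℕ) (𝓕 : Set (Finset (Finset ℕ))) :
    0 ≤ lagrangianDensity r 𝓕 := by
  apply Real.sSup_nonneg
  rintro y ⟨m, E, -, -, rfl⟩
  exact specRad_one_nonneg r m E

private lemma lagrangianDensity_bddAbove (r : ℕ) (𝓕 : Set (Finset (Finset ℕ))) :
    ∀ y ∈ { y : ℝ | ∃ (m : ℕ) (E : Finset (Finset (Fin m))),
      (∀ e ∈ E, e.card = r) ∧ FamFree E 𝓕 ∧ y = specRad r m E 1 },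
      y ≤ (Nat.factorial r : ℝ) * 3 := by
  rintro y ⟨m, E, -, -, rfl⟩
  exact specRad_one_le r m E

/-- Inequality (3.1): for `p > 1` and any `𝓕`-free `r`-graph `H`,
`λ^(p)(H) ≤ (r! e(H))^{1-1/p} (π_λ(𝓕))^{1/p}`. -/
theorem specRad_le_of_famFree (p : ℝ) (hp : 1 < p) (r n : ℕ)
    (𝓕 : Set (Finset (Finset ℕ)))
    (E : Finset (Finset (Fin n))) (hunif : ∀ e ∈ E, e.card = r)
    (hfree : FamFree E 𝓕) :
    specRad r n E p ≤
      ((Nat.factorial r : ℝ) * (E.card : ℝ)) ^ (1 - 1 / p) *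
        (lagrangianDensity r 𝓕) ^ (1 / p) := by
  have hp0 : 0 < p := lt_trans one_pos hp
  have hL0 : 0 ≤ lagrangianDensity r 𝓕 := lagrangianDensity_nonneg r 𝓕
  have hRHS : 0 ≤ ((Nat.factorial r : ℝ) * (E.card : ℝ)) ^ (1 - 1 / p) *
      (lagrangianDensity r 𝓕) ^ (1 / p) :=
    mul_nonneg (Real.rpow_nonneg (by positivity) _) (Real.rpow_nonneg hL0 _)
  rw [specRad]
  apply Real.sSup_le _ hRHS
  rintro y ⟨x, hx, rfl⟩
  rcases Finset.eq_empty_or_nonempty E with hE | hE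
  · subst hE; simpa using hRHS
  have hNpos : (0:ℝ) < (E.card : ℝ) := by
    exact_mod_cast Finset.card_pos.2 hE
  set N : ℝ := (E.card : ℝ) with hNdef
  set a : Finset (Fin n) → ℝ := fun e => ∏ v ∈ e, |x v| with hadef
  have ha : ∀ e, 0 ≤ a e := fun e => Finset.prod_nonneg fun v _ => abs_nonneg _
  have h1 : ∑ e ∈ E, ∏ v ∈ e, x v ≤ ∑ e ∈ E, a e :=
    Finset.sum_le_sum fun e _ =>
      (le_abs_self _).trans (le_of_eq (Finset.abs_prod _ _))
  have hw : ∑ _e ∈ E, N⁻¹ = 1 := by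
    rw [Finset.sum_const, nsmul_eq_mul, hNdef, mul_inv_cancel₀ (ne_of_gt hNpos)]
  have hold := Real.arith_mean_le_rpow_mean (s := E) (fun _ => N⁻¹) a
    (fun _ _ => by positivity) hw (fun e _ => ha e) hp.le
  rw [← Finset.mul_sum, ← Finset.mul_sum] at hold
  set S : ℝ := ∑ e ∈ E, a e ^ p with hSdef
  have hS0 : 0 ≤ S :=
    Finset.sum_nonneg fun e _ => Real.rpow_nonneg (ha e) _
  set A : ℝ := (Nat.factorial r : ℝ) * S with hAdef
  have hA0 : 0 ≤ A := mul_nonneg (by positivity) hS0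
  -- A is an element of the p = 1 spectral set
  have hAmem : A ∈ {y : ℝ | ∃ x' : Fin n → ℝ,
      (∑ i : Fin n, |x' i| ^ (1 : ℝ)) = 1 ∧
      y = (Nat.factorial r : ℝ) * ∑ e ∈ E, ∏ v ∈ e, x' v} := by
    refine ⟨fun i => |x i| ^ p, ?_, ?_⟩
    · calc ∑ i : Fin n, |(fun i => |x i| ^ p) i| ^ (1 : ℝ)
          = ∑ i : Fin n, |x i| ^ p := Finset.sum_congr rfl fun i _ => by
            rw [Real.rpow_one, abs_of_nonneg (Real.rpow_nonneg (abs_nonneg _) _)]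
        _ = 1 := hx
    · show A = (Nat.factorial r : ℝ) * ∑ e ∈ E, ∏ v ∈ e, |x v| ^ p
      rw [hAdef]
      congr 1
      rw [hSdef]
      refine Finset.sum_congr rfl fun e _ => ?_
      simp only [hadef]
      exact (Real.finset_prod_rpow e (fun v => |x v|)
        (fun v _ => abs_nonneg _) p).symm
  have hA_le : A ≤ specRad r n E 1 := by
    rw [specRad]
    exact le_csSup ⟨(Nat.factorial r : ℝ) * 3,
      fun y hy => specRad_one_elem_le r n E y hy⟩ hAmem
  have hS1L : specRad r n E 1 ≤ lagrangianDensity r 𝓕 := by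
    rw [lagrangianDensity]
    exact le_csSup ⟨(Nat.factorial r : ℝ) * 3,
      fun y hy => lagrangianDensity_bddAbove r 𝓕 y hy⟩ ⟨n, E, hunif, hfree, rfl⟩
  have hAL : A ≤ lagrangianDensity r 𝓕 := hA_le.trans hS1L
  have hBpos : (0:ℝ) < (Nat.factorial r : ℝ) * N := by positivity
  -- Hölder rearranged
  have h2 : ∑ e ∈ E, a e ≤ N * (N⁻¹ * S) ^ (1 / p) := by
    have := mul_le_mul_of_nonneg_left hold (le_of_lt hNpos)
    calc ∑ e ∈ E, a e = N * (N⁻¹ * ∑ e ∈ E, a e) := by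
          field_simp
      _ ≤ N * (N⁻¹ * S) ^ (1 / p) := this
  have hkey : (Nat.factorial r : ℝ) * (N * (N⁻¹ * S) ^ (1 / p)) =
      ((Nat.factorial r : ℝ) * N) ^ (1 - 1 / p) * A ^ (1 / p) := by
    have hsplit : (Nat.factorial r : ℝ) * N =
        ((Nat.factorial r : ℝ) * N) ^ (1 - 1 / p) *
          ((Nat.factorial r : ℝ) * N) ^ (1 / p) := by
      rw [← Real.rpow_add hBpos, sub_add_cancel, Real.rpow_one]
    calc (Nat.factorial r : ℝ) * (N * (N⁻¹ * S) ^ (1 / p))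
        = ((Nat.factorial r : ℝ) * N) * (N⁻¹ * S) ^ (1 / p) := by ring
      _ = ((Nat.factorial r : ℝ) * N) ^ (1 - 1 / p) *
            (((Nat.factorial r : ℝ) * N) ^ (1 / p) * (N⁻¹ * S) ^ (1 / p)) := by
          conv_lhs => rw [hsplit]
          ring
      _ = ((Nat.factorial r : ℝ) * N) ^ (1 - 1 / p) *
            (((Nat.factorial r : ℝ) * N) * (N⁻¹ * S)) ^ (1 / p) := by
          rw [Real.mul_rpow (le_of_lt hBpos) (mul_nonneg (by positivity) hS0)]
      _ = ((Nat.factorial r : ℝ) * N) ^ (1 - 1 / p) * A ^ (1 / p) := by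
          congr 2
          rw [hAdef]
          field_simp
  calc (Nat.factorial r : ℝ) * ∑ e ∈ E, ∏ v ∈ e, x v
      ≤ (Nat.factorial r : ℝ) * ∑ e ∈ E, a e :=
        mul_le_mul_of_nonneg_left h1 (by positivity)
    _ ≤ (Nat.factorial r : ℝ) * (N * (N⁻¹ * S) ^ (1 / p)) :=
        mul_le_mul_of_nonneg_left h2 (by positivity)
    _ = ((Nat.factorial r : ℝ) * N) ^ (1 - 1 / p) * A ^ (1 / p) := hkey
    _ ≤ ((Nat.factorial r : ℝ) * N) ^ (1 - 1 / p) *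
          (lagrangianDensity r 𝓕) ^ (1 / p) :=
        mul_le_mul_of_nonneg_left
          (Real.rpow_le_rpow hA0 hAL (by positivity))
          (Real.rpow_nonneg (le_of_lt hBpos) _)
end

section
/- For all k ≥ r ≥ 2, the Lagrangian density of the family ℱ_{k+1}^{(r)} satisfies π_λ(ℱ_{k+1}^{(r)}) ≤ (k)_r/k^r; that is, every ℱ_{k+1}^{(r)}-free r-graph H satisfies λ^(1)(H) ≤ (k)_r/k^r. -/
open Finset

/-!
When no edge contains both `i` and `j`, the Lagrangian polynomial is affine in `(x i, x j)`, so
moving all the weight of `j` onto `i`, or of `i` onto `j`, does not decrease it.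
Repeating this shrinks the support `S` of the weighting until every pair in `S` is covered by
an edge. If `|S| > k`, an edge inside `S` extends to a `(k+1)`-set `C ⊆ S`, the core of a member
of `ℱ_{k+1}`. Otherwise only the `r`-subsets of `S` carry
weight, and Maclaurin's inequality bounds `r! e_r(x)` on the simplex by `(k)_r / k^r`.
-/

open scoped Nat

-- The induction step of Maclaurin's inequality: a variable `m` joins `t` variables of mean `a`.
lemma choose_mul_pow_add_le (t q : ℕ) {a m : ℝ} (ha : 0 ≤ a) (hm : 0 ≤ m) :
    (t.choose (q + 1) : ℝ) * a ^ (q + 1) + m * (t.choose q : ℝ) * a ^ q ≤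
      ((t + 1).choose (q + 1) : ℝ) * ((t * a + m) / (t + 1)) ^ (q + 1) := by
  set μ := (t * a + m) / (t + 1) with hμ
  have hμ0 : 0 ≤ μ := by positivity
  have hμ' : (t + 1) * μ = t * a + m := by rw [hμ]; field_simp
  have hpascal : ((t + 1).choose (q + 1) : ℝ) = t.choose q + t.choose (q + 1) := by
    exact_mod_cast Nat.choose_succ_succ' t q
  have hchoose : ((t + 1) * t.choose q : ℝ) = (t + 1).choose (q + 1) * (q + 1) := by
    exact_mod_cast Nat.add_one_mul_choose_eq t q
  -- Bernoulli: `μ ^ (q+1)` lies above its tangent line at `a`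
  have hbern := pow_add_mul_le_add_pow ha (b := μ - a) (by linarith) (q + 1)
  simp only [add_sub_cancel, Nat.add_sub_cancel, Nat.cast_add, Nat.cast_one] at hbern
  linear_combination ((t + 1).choose (q + 1) : ℝ) * hbern + a ^ q * (μ - a) * hchoose
    - (t.choose q : ℝ) * a ^ q * hμ' - a ^ (q + 1) * hpascal

variable {α : Type*}

section Maclaurin

variable [DecidableEq α]

lemma sum_powersetCard_succ_insert_prod {s : Finset α} {i : α} (hi : i ∉ s) (q : ℕ)
    (x : α → ℝ) :
    ∑ e ∈ (insert i s).powersetCard (q + 1), ∏ v ∈ e, x v =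
      ∑ e ∈ s.powersetCard (q + 1), ∏ v ∈ e, x v + x i * ∑ e ∈ s.powersetCard q, ∏ v ∈ e, x v := by
  have hi' : ∀ e ∈ s.powersetCard q, i ∉ e := fun e he hie => hi ((mem_powersetCard.1 he).1 hie)
  rw [powersetCard_succ_insert hi, sum_union, sum_image, mul_sum]
  · exact congrArg _ (sum_congr rfl fun e he => prod_insert (hi' e he))
  · exact fun e he e' he' h => by
      rw [← erase_insert (hi' e he), ← erase_insert (hi' e' he'), h]
  · refine disjoint_left.2 fun e he he' => ?_
    obtain ⟨e', -, rfl⟩ := mem_image.1 he'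
    exact hi ((mem_powersetCard.1 he).1 (mem_insert_self i e'))

/-- Maclaurin's inequality `e_r(x) ≤ (t choose r) (mean x) ^ r`, with `s` padded by zeros to
`t` variables. -/
lemma sum_powersetCard_prod_le_choose_mul_pow (x : α → ℝ) {s : Finset α}
    (hx : ∀ i ∈ s, 0 ≤ x i) {t : ℕ} (hst : #s ≤ t) (r : ℕ) :
    ∑ e ∈ s.powersetCard r, ∏ v ∈ e, x v ≤ t.choose r * ((∑ i ∈ s, x i) / t) ^ r := by
  induction s using Finset.induction_on generalizing t r with
  | empty =>
    cases r with
    | zero => simp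
    | succ q => rw [powersetCard_eq_empty.2 (by simp)]; simp
  | insert i s hi ih =>
    rw [card_insert_of_notMem hi] at hst
    obtain ⟨t, rfl⟩ : ∃ t', t = t' + 1 := ⟨t - 1, by omega⟩
    have hs : #s ≤ t := by omega
    have hxs : ∀ j ∈ s, 0 ≤ x j := fun j hj => hx j (mem_insert_of_mem hj)
    have hxi : 0 ≤ x i := hx i (mem_insert_self i s)
    have hmean : (t : ℝ) * ((∑ j ∈ s, x j) / t) = ∑ j ∈ s, x j := by
      rcases t.eq_zero_or_pos with rfl | ht
      · simp [card_eq_zero.1 (Nat.le_zero.1 hs)]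
      · field_simp
    cases r with
    | zero => simp
    | succ q =>
      rw [sum_powersetCard_succ_insert_prod hi, sum_insert hi, add_comm (x i), ← hmean]
      push_cast
      calc _ ≤ (t.choose (q + 1) : ℝ) * ((∑ j ∈ s, x j) / t) ^ (q + 1)
            + x i * ((t.choose q : ℝ) * ((∑ j ∈ s, x j) / t) ^ q) :=
            add_le_add (ih hxs hs (q + 1)) (mul_le_mul_of_nonneg_left (ih hxs hs q) hxi)
        _ ≤ _ := by
          rw [← mul_assoc]
          exact choose_mul_pow_add_le t q (div_nonneg (sum_nonneg hxs) t.cast_nonneg) hxi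

end Maclaurin

def lagrangePoly (E : Finset (Finset α)) (x : α → ℝ) : ℝ := ∑ e ∈ E, ∏ v ∈ e, x v

def CoversPairs (E : Finset (Finset α)) (S : Finset α) : Prop :=
  ∀ u ∈ S, ∀ v ∈ S, u ≠ v → ∃ e ∈ E, u ∈ e ∧ v ∈ e

noncomputable def weightSupport [Fintype α] (x : α → ℝ) : Finset α := {v | x v ≠ 0}

@[simp]
lemma mem_weightSupport [Fintype α] {x : α → ℝ} {v : α} : v ∈ weightSupport x ↔ x v ≠ 0 := by
  simp [weightSupport]

variable [DecidableEq α]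

def linkPoly (E : Finset (Finset α)) (x : α → ℝ) (i : α) : ℝ :=
  ∑ e ∈ E with i ∈ e, ∏ v ∈ e.erase i, x v

def transferWeight (x : α → ℝ) (i j : α) : α → ℝ :=
  Function.update (Function.update x i (x i + x j)) j 0

section Transfer

variable {E : Finset (Finset α)} {i j : α}

lemma sum_filter_mem_prod_update_update (hij : i ≠ j) (hnc : ∀ e ∈ E, i ∈ e → j ∉ e)
    (x : α → ℝ) (s t : ℝ) :
    ∑ e ∈ E with i ∈ e, ∏ v ∈ e, Function.update (Function.update x i s) j t v =
      s * linkPoly E x i := by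
  rw [linkPoly, mul_sum]
  refine sum_congr rfl fun e he => ?_
  obtain ⟨heE, hie⟩ := mem_filter.1 he
  rw [← mul_prod_erase e _ hie, Function.update_of_ne hij, Function.update_self]
  refine congrArg _ (prod_congr rfl fun v hv => ?_)
  have hvj : v ≠ j := fun h => hnc e heE hie (h ▸ mem_of_mem_erase hv)
  rw [Function.update_of_ne hvj, Function.update_of_ne (ne_of_mem_erase hv)]

lemma lagrangePoly_update_update (hij : i ≠ j) (hnc : ∀ e ∈ E, i ∈ e → j ∉ e)
    (x : α → ℝ) (s t : ℝ) :
    lagrangePoly E (Function.update (Function.update x i s) j t) =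
      s * linkPoly E x i + t * linkPoly E x j + lagrangePoly {e ∈ E | i ∉ e ∧ j ∉ e} x := by
  have hswap : Function.update (Function.update x i s) j t =
      Function.update (Function.update x j t) i s := (Function.update_comm hij.symm _ _ _).symm
  have hfilter : {e ∈ E | i ∉ e ∧ j ∈ e} = {e ∈ E | j ∈ e} :=
    filter_congr fun e he => and_iff_right_of_imp fun hje hie => hnc e he hie hje
  rw [lagrangePoly, lagrangePoly, ← sum_filter_add_sum_filter_not E (fun e => i ∈ e),
    ← sum_filter_add_sum_filter_not {e ∈ E | i ∉ e} (fun e => j ∈ e), filter_filter,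
    filter_filter, hfilter, sum_filter_mem_prod_update_update hij hnc, hswap,
    sum_filter_mem_prod_update_update hij.symm (fun e he hje hie => hnc e he hie hje), add_assoc]
  congr 2
  refine sum_congr rfl fun e he => prod_congr rfl fun v hv => ?_
  obtain ⟨-, hie, hje⟩ := mem_filter.1 he
  rw [Function.update_of_ne (ne_of_mem_of_not_mem hv hie),
    Function.update_of_ne (ne_of_mem_of_not_mem hv hje)]

lemma lagrangePoly_le_transferWeight (hij : i ≠ j) (hnc : ∀ e ∈ E, i ∈ e → j ∉ e)
    {x : α → ℝ} (hxj : 0 ≤ x j) (hlink : linkPoly E x j ≤ linkPoly E x i) :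
    lagrangePoly E x ≤ lagrangePoly E (transferWeight x i j) := by
  have hx : x = Function.update (Function.update x i (x i)) j (x j) := by simp
  conv_lhs => rw [hx]
  rw [transferWeight, lagrangePoly_update_update hij hnc, lagrangePoly_update_update hij hnc]
  nlinarith [mul_le_mul_of_nonneg_left hlink hxj]

lemma transferWeight_apply_left (hij : i ≠ j) (x : α → ℝ) :
    transferWeight x i j i = x i + x j := by
  rw [transferWeight, Function.update_of_ne hij, Function.update_self]

lemma transferWeight_apply_right (x : α → ℝ) : transferWeight x i j j = 0 :=
  Function.update_self _ _ _

lemma transferWeight_apply_of_ne (x : α → ℝ) {v : α} (hvi : v ≠ i) (hvj : v ≠ j) :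
    transferWeight x i j v = x v := by
  rw [transferWeight, Function.update_of_ne hvj, Function.update_of_ne hvi]

lemma transferWeight_nonneg (hij : i ≠ j) {x : α → ℝ} (hx : ∀ v, 0 ≤ x v) (v : α) :
    0 ≤ transferWeight x i j v := by
  rcases eq_or_ne v i with rfl | hvi
  · rw [transferWeight_apply_left hij]; exact add_nonneg (hx v) (hx j)
  rcases eq_or_ne v j with rfl | hvj
  · rw [transferWeight_apply_right]
  · rw [transferWeight_apply_of_ne x hvi hvj]; exact hx v

variable [Fintype α]

lemma sum_transferWeight (hij : i ≠ j) (x : α → ℝ) :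
    ∑ v, transferWeight x i j v = ∑ v, x v := by
  have hsplit : ∀ f : α → ℝ, ∑ v, f v = f i + (f j + ∑ v ∈ (univ.erase i).erase j, f v) :=
    fun f => by
      rw [add_sum_erase _ _ (mem_erase.2 ⟨hij.symm, mem_univ j⟩), add_sum_erase _ _ (mem_univ i)]
  rw [hsplit, hsplit x, transferWeight_apply_left hij, transferWeight_apply_right, zero_add,
    add_assoc]
  refine congrArg _ (congrArg _ (sum_congr rfl fun v hv => ?_))
  obtain ⟨hvj, hvi⟩ := mem_erase.1 hv
  exact transferWeight_apply_of_ne x (ne_of_mem_erase hvi) hvj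

lemma card_weightSupport_transferWeight_lt (hij : i ≠ j) {x : α → ℝ} (hxi : x i ≠ 0)
    (hxj : x j ≠ 0) : #(weightSupport (transferWeight x i j)) < #(weightSupport x) := by
  refine card_lt_card ((ssubset_iff_of_subset fun v hv => ?_).2
    ⟨j, mem_weightSupport.2 hxj, fun h => mem_weightSupport.1 h (transferWeight_apply_right x)⟩)
  rw [mem_weightSupport] at hv ⊢
  rcases eq_or_ne v i with rfl | hvi
  · exact hxi
  rcases eq_or_ne v j with rfl | hvj
  · exact absurd (transferWeight_apply_right x) hv
  · rwa [transferWeight_apply_of_ne x hvi hvj] at hv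

end Transfer

section Support

variable [Fintype α] {E : Finset (Finset α)} {x : α → ℝ}

lemma lagrangePoly_filter_subset_weightSupport :
    lagrangePoly {e ∈ E | e ⊆ weightSupport x} x = lagrangePoly E x := by
  refine sum_filter_of_ne fun e _ he v hv => ?_
  by_contra hxv
  exact he (prod_eq_zero hv (by simpa using hxv))

lemma exists_subset_weightSupport_of_lagrangePoly_pos (h : 0 < lagrangePoly E x) :
    ∃ e ∈ E, e ⊆ weightSupport x := by
  rw [← lagrangePoly_filter_subset_weightSupport] at h
  obtain ⟨e, he, -⟩ := exists_ne_zero_of_sum_ne_zero h.ne'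
  exact ⟨e, (mem_filter.1 he).1, (mem_filter.1 he).2⟩

lemma lagrangePoly_le_sum_powersetCard_weightSupport {r : ℕ} (hunif : ∀ e ∈ E, #e = r)
    (hx : ∀ v, 0 ≤ x v) :
    lagrangePoly E x ≤ ∑ e ∈ (weightSupport x).powersetCard r, ∏ v ∈ e, x v := by
  rw [← lagrangePoly_filter_subset_weightSupport]
  refine sum_le_sum_of_subset_of_nonneg (fun e he => ?_) fun e _ _ => prod_nonneg fun v _ => hx v
  obtain ⟨heE, heS⟩ := mem_filter.1 he
  exact mem_powersetCard.2 ⟨heS, hunif e heE⟩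

end Support

section FFree

variable {n k r : ℕ} {E : Finset (Finset (Fin n))}

lemma factorial_mul_lagrangePoly_le_of_coversPairs (hrk : r ≤ k) (hunif : ∀ e ∈ E, #e = r)
    (hfree : ¬ ContainsFFam (k + 1) E) {x : Fin n → ℝ} (hx : ∀ v, 0 ≤ x v) (hsum : ∑ v, x v = 1)
    (hcov : CoversPairs E (weightSupport x)) :
    r ! * lagrangePoly E x ≤ k.descFactorial r / (k : ℝ) ^ r := by
  rcases le_or_gt (lagrangePoly E x) 0 with hneg | hpos
  · exact (mul_nonpos_of_nonneg_of_nonpos (by positivity) hneg).trans (by positivity)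
  have hS : #(weightSupport x) ≤ k := by
    by_contra! hS
    obtain ⟨e, he, heS⟩ := exists_subset_weightSupport_of_lagrangePoly_pos hpos
    obtain ⟨C, heC, hCS, hC⟩ := exists_subsuperset_card_eq heS (by rw [hunif e he]; omega) hS
    exact hfree ⟨C, hC, ⟨e, he, heC⟩, fun u hu v hv huv => hcov u (hCS hu) v (hCS hv) huv⟩
  calc r ! * lagrangePoly E x
      ≤ r ! * (k.choose r * ((∑ v ∈ weightSupport x, x v) / k) ^ r) := by
        gcongr
        exact (lagrangePoly_le_sum_powersetCard_weightSupport hunif hx).trans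
          (sum_powersetCard_prod_le_choose_mul_pow x (fun v _ => hx v) hS r)
    _ = k.descFactorial r / (k : ℝ) ^ r := by
        rw [weightSupport, sum_filter_ne_zero, hsum, Nat.descFactorial_eq_factorial_mul_choose]
        push_cast
        ring

lemma factorial_mul_lagrangePoly_le (hrk : r ≤ k) (hunif : ∀ e ∈ E, #e = r)
    (hfree : ¬ ContainsFFam (k + 1) E) {x : Fin n → ℝ} (hx : ∀ v, 0 ≤ x v)
    (hsum : ∑ v, x v = 1) :
    r ! * lagrangePoly E x ≤ k.descFactorial r / (k : ℝ) ^ r := by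
  induction hN : #(weightSupport x) using Nat.strong_induction_on generalizing x with
  | _ N ih =>
  by_cases hcov : CoversPairs E (weightSupport x)
  · exact factorial_mul_lagrangePoly_le_of_coversPairs hrk hunif hfree hx hsum hcov
  rw [CoversPairs] at hcov
  push Not at hcov
  obtain ⟨i, hi, j, hj, hij, hnc⟩ := hcov
  wlog hlink : linkPoly E x j ≤ linkPoly E x i generalizing i j
  · exact this j hj i hi hij.symm (fun e he hje hie => hnc e he hie hje) (le_of_not_ge hlink)
  have hxi : x i ≠ 0 := by simpa using hi
  have hxj : x j ≠ 0 := by simpa using hj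
  calc r ! * lagrangePoly E x ≤ r ! * lagrangePoly E (transferWeight x i j) := by
        gcongr
        exact lagrangePoly_le_transferWeight hij hnc (hx j) hlink
    _ ≤ _ := ih _ (hN ▸ card_weightSupport_transferWeight_lt hij hxi hxj)
        (transferWeight_nonneg hij hx)
        (by rw [sum_transferWeight hij, hsum]) rfl

end FFree

theorem lagrangian_FFam_free_general (k r : ℕ) (hrk : r ≤ k)
    (n : ℕ) (E : Finset (Finset (Fin n))) (hunif : ∀ e ∈ E, e.card = r)
    (hfree : ¬ ContainsFFam (k + 1) E) :
    specRad r n E 1 ≤ (Nat.descFactorial k r : ℝ) / (k : ℝ) ^ r := by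
  refine Real.sSup_le ?_ (by positivity)
  rintro _ ⟨x, hx, rfl⟩
  have habs : lagrangePoly E x ≤ lagrangePoly E fun v => |x v| :=
    sum_le_sum fun e _ => (le_abs_self _).trans (abs_prod e x).le
  calc (r ! : ℝ) * lagrangePoly E x ≤ r ! * lagrangePoly E fun v => |x v| := by gcongr
    _ ≤ _ := factorial_mul_lagrangePoly_le hrk hunif hfree (fun v => abs_nonneg (x v))
        (by simpa using hx)

/-- Proposition 3.5: for `k ≥ r ≥ 2`, every `ℱ_{k+1}^{(r)}`-free `r`-graph `H`
satisfies `λ^(1)(H) ≤ (k)_r / k^r`; hence `π_λ(ℱ_{k+1}^{(r)}) ≤ (k)_r / k^r`. -/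
theorem lagrangian_FFam_free (k r : ℕ) (hr : 2 ≤ r) (hrk : r ≤ k)
    (n : ℕ) (E : Finset (Finset (Fin n))) (hunif : ∀ e ∈ E, e.card = r)
    (hfree : ¬ ContainsFFam (k + 1) E) :
    specRad r n E 1 ≤ (Nat.descFactorial k r : ℝ) / (k : ℝ) ^ r :=
  lagrangian_FFam_free_general k r hrk n E hunif hfree
end

section
/- Let k ≥ r ≥ 3 and let H be an H_{k+1}^{(r)}-free r-graph on n vertices. Set d = (k + 1 + (r−2)·C(k+1,2))·C(n,r−3), and let H₁ be the spanning subgraph of H obtained by removing every edge that contains a pair of vertices whose codegree in H is at most d. Then H₁ is 𝒦_{k+1}^{(r)}-free. -/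
open Finset

lemma three_count {n : ℕ} (r : ℕ) (hr : 3 ≤ r) (E : Finset (Finset (Fin n)))
    (hunif : ∀ e ∈ E, e.card = r) (u v w : Fin n) (huv : u ≠ v) (huw : u ≠ w) (hvw : v ≠ w) :
    (E.filter fun e => u ∈ e ∧ v ∈ e ∧ w ∈ e).card ≤ n.choose (r - 3) := by
  classical
  have hcard3 : ({u, v, w} : Finset (Fin n)).card = 3 := by
    rw [card_insert_of_notMem (by simp [huv, huw]),
      card_insert_of_notMem (by simp [hvw]), card_singleton]
  have hmaps : ∀ e ∈ E.filter (fun e => u ∈ e ∧ v ∈ e ∧ w ∈ e),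
      e \ {u, v, w} ∈ Finset.powersetCard (r - 3) (univ : Finset (Fin n)) := by
    intro e he
    simp only [mem_filter] at he
    obtain ⟨heE, hue, hve, hwe⟩ := he
    have hsub : ({u, v, w} : Finset (Fin n)) ⊆ e := by
      intro x hx
      simp only [mem_insert, mem_singleton] at hx
      rcases hx with h | h | h <;> subst h <;> assumption
    rw [Finset.mem_powersetCard]
    refine ⟨subset_univ _, ?_⟩
    rw [card_sdiff_of_subset hsub, hcard3, hunif e heE]
  have hinj : Set.InjOn (fun e => e \ ({u, v, w} : Finset (Fin n)))
      (E.filter fun e => u ∈ e ∧ v ∈ e ∧ w ∈ e) := by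
    intro e₁ h₁ e₂ h₂ h
    simp only [coe_filter, Set.mem_setOf_eq] at h₁ h₂
    have hs₁ : ({u, v, w} : Finset (Fin n)) ⊆ e₁ := by
      intro x hx; simp only [mem_insert, mem_singleton] at hx
      rcases hx with hh | hh | hh <;> subst hh <;> tauto
    have hs₂ : ({u, v, w} : Finset (Fin n)) ⊆ e₂ := by
      intro x hx; simp only [mem_insert, mem_singleton] at hx
      rcases hx with hh | hh | hh <;> subst hh <;> tauto
    have := congrArg (fun s => s ∪ ({u, v, w} : Finset (Fin n))) h
    simpa [Finset.sdiff_union_of_subset hs₁, Finset.sdiff_union_of_subset hs₂] using this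
  calc (E.filter fun e => u ∈ e ∧ v ∈ e ∧ w ∈ e).card
      ≤ (Finset.powersetCard (r - 3) (univ : Finset (Fin n))).card :=
        Finset.card_le_card_of_injOn _ hmaps hinj
    _ = n.choose (r - 3) := by
        rw [Finset.card_powersetCard, Finset.card_univ, Fintype.card_fin]

lemma bad_count {n : ℕ} (r : ℕ) (hr : 3 ≤ r) (E : Finset (Finset (Fin n)))
    (hunif : ∀ e ∈ E, e.card = r) (u v : Fin n) (huv : u ≠ v)
    (S : Finset (Fin n)) (hu : u ∉ S) (hv : v ∉ S) :
    (E.filter fun e => u ∈ e ∧ v ∈ e ∧ ¬ Disjoint e S).card ≤ S.card * n.choose (r - 3) := by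
  classical
  have hsub : E.filter (fun e => u ∈ e ∧ v ∈ e ∧ ¬ Disjoint e S)
      ⊆ S.biUnion (fun w => E.filter fun e => u ∈ e ∧ v ∈ e ∧ w ∈ e) := by
    intro e he
    simp only [mem_filter] at he
    obtain ⟨heE, hue, hve, hnd⟩ := he
    rw [Finset.not_disjoint_iff] at hnd
    obtain ⟨w, hwe, hwS⟩ := hnd
    exact mem_biUnion.mpr ⟨w, hwS, by simp [mem_filter, heE, hue, hve, hwe]⟩
  calc (E.filter fun e => u ∈ e ∧ v ∈ e ∧ ¬ Disjoint e S).card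
      ≤ (S.biUnion (fun w => E.filter fun e => u ∈ e ∧ v ∈ e ∧ w ∈ e)).card :=
        card_le_card hsub
    _ ≤ ∑ w ∈ S, (E.filter fun e => u ∈ e ∧ v ∈ e ∧ w ∈ e).card := card_biUnion_le
    _ ≤ ∑ _w ∈ S, n.choose (r - 3) := Finset.sum_le_sum (fun w hw =>
        three_count r hr E hunif u v w huv
          (fun h => hu (h ▸ hw)) (fun h => hv (h ▸ hw)))
    _ = S.card * n.choose (r - 3) := by rw [Finset.sum_const, smul_eq_mul]

lemma pairs_card {m : ℕ} (P : Finset (Fin m × Fin m)) (hP : ∀ p ∈ P, p.1 < p.2) :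
    P.card ≤ m.choose 2 := by
  classical
  have hmaps : ∀ p ∈ P, ({p.1, p.2} : Finset (Fin m)) ∈
      Finset.powersetCard 2 (univ : Finset (Fin m)) := by
    intro p hp
    rw [Finset.mem_powersetCard]
    exact ⟨subset_univ _, by rw [card_insert_of_notMem (by simp [(hP p hp).ne]), card_singleton]⟩
  have hinj : Set.InjOn (fun p : Fin m × Fin m => ({p.1, p.2} : Finset (Fin m))) P := by
    intro p hp q hq h
    simp only [Finset.mem_coe] at hp hq
    have hp' := hP p hp
    have hq' := hP q hq
    simp only at h
    have h1 : p.1 ∈ ({q.1, q.2} : Finset (Fin m)) := by rw [← h]; simp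
    have h2 : p.2 ∈ ({q.1, q.2} : Finset (Fin m)) := by rw [← h]; simp
    simp only [mem_insert, mem_singleton] at h1 h2
    have : p.1 = q.1 ∧ p.2 = q.2 := by
      rcases h1 with h1 | h1 <;> rcases h2 with h2 | h2
      · rw [h1, h2] at hp'; exact absurd hp' (lt_irrefl _)
      · exact ⟨h1, h2⟩
      · rw [h1, h2] at hp'; exact absurd hp' (asymm hq')
      · rw [h1, h2] at hp'; exact absurd hp' (lt_irrefl _)
    exact Prod.ext this.1 this.2
  calc P.card ≤ (Finset.powersetCard 2 (univ : Finset (Fin m))).card :=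
        Finset.card_le_card_of_injOn _ hmaps hinj
    _ = m.choose 2 := by rw [Finset.card_powersetCard, Finset.card_univ, Fintype.card_fin]

lemma build_expansion {n : ℕ} (k r : ℕ) (hr : 3 ≤ r) (E : Finset (Finset (Fin n)))
    (hunif : ∀ e ∈ E, e.card = r) (c : Fin (k + 1) ↪ Fin n)
    (hcod : ∀ i j : Fin (k + 1), i < j →
      (k + 1 + (r - 2) * (k + 1).choose 2) * n.choose (r - 3) < codeg E (c i) (c j)) :
    ∀ P : Finset (Fin (k + 1) × Fin (k + 1)), (∀ p ∈ P, p.1 < p.2) →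
      ∃ G : Fin (k + 1) × Fin (k + 1) → Finset (Fin n),
        (∀ p ∈ P, G p ∈ E ∧ (G p).card = r ∧
          G p ∩ Finset.univ.image (fun i => c i) = {c p.1, c p.2}) ∧
        (∀ p ∈ P, ∀ q ∈ P, p ≠ q → G p ∩ G q ⊆ Finset.univ.image (fun i => c i)) := by
  classical
  intro P
  induction P using Finset.induction_on with
  | empty => exact fun _ => ⟨fun _ => ∅, by simp, by simp⟩
  | @insert p P hpP ih =>
    intro hlt
    have hp : p.1 < p.2 := hlt p (mem_insert_self _ _)
    have hPlt : ∀ q ∈ P, q.1 < q.2 := fun q hq => hlt q (mem_insert_of_mem hq)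
    obtain ⟨G, hG1, hG2⟩ := ih hPlt
    set Cc : Finset (Fin n) := Finset.univ.image (fun i => c i) with hCc
    set u : Fin n := c p.1
    set v : Fin n := c p.2
    have huv : u ≠ v := fun h => absurd (c.injective h) (ne_of_lt hp)
    have huC : u ∈ Cc := mem_image.mpr ⟨p.1, mem_univ _, rfl⟩
    have hvC : v ∈ Cc := mem_image.mpr ⟨p.2, mem_univ _, rfl⟩
    set S : Finset (Fin n) := (Cc \ {u, v}) ∪ P.biUnion (fun q => G q \ Cc) with hS
    have huS : u ∉ S := by
      simp only [hS, mem_union, mem_sdiff, mem_biUnion, not_or]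
      exact ⟨fun h => h.2 (by simp), fun ⟨q, hq, hq2⟩ => hq2.2 huC⟩
    have hvS : v ∉ S := by
      simp only [hS, mem_union, mem_sdiff, mem_biUnion, not_or]
      exact ⟨fun h => h.2 (by simp), fun ⟨q, hq, hq2⟩ => hq2.2 hvC⟩
    -- cardinality bound on S
    have hCcard : Cc.card ≤ k + 1 := le_trans (card_image_le) (by simp)
    have hScard : S.card ≤ k + 1 + (r - 2) * (k + 1).choose 2 := by
      have h1 : (Cc \ {u, v}).card ≤ k + 1 := le_trans (card_le_card (sdiff_subset)) hCcard
      have h2 : (P.biUnion (fun q => G q \ Cc)).card ≤ ∑ q ∈ P, (G q \ Cc).card :=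
        card_biUnion_le
      have h3 : ∀ q ∈ P, (G q \ Cc).card = r - 2 := by
        intro q hq
        obtain ⟨hqE, hqcard, hqint⟩ := hG1 q hq
        have hcq : (G q ∩ Cc).card = 2 := by
          rw [hqint, card_insert_of_notMem (by
            simp only [mem_singleton]
            exact fun h => absurd (c.injective h) (ne_of_lt (hPlt q hq))), card_singleton]
        have := Finset.card_sdiff_add_card_inter (G q) Cc
        omega
      have h4 : ∑ q ∈ P, (G q \ Cc).card = P.card * (r - 2) := by
        rw [Finset.sum_congr rfl h3, Finset.sum_const, smul_eq_mul]
      have h5 : P.card ≤ (k + 1).choose 2 := pairs_card P hPlt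
      calc S.card ≤ (Cc \ {u, v}).card + (P.biUnion (fun q => G q \ Cc)).card :=
            card_union_le _ _
        _ ≤ (k + 1) + P.card * (r - 2) := by omega
        _ ≤ k + 1 + (r - 2) * (k + 1).choose 2 := by
            have h6 : P.card * (r - 2) ≤ (k + 1).choose 2 * (r - 2) :=
              Nat.mul_le_mul_right _ h5
            rw [Nat.mul_comm ((k + 1).choose 2)] at h6
            omega
    -- find a good edge
    have hbad : (E.filter fun e => u ∈ e ∧ v ∈ e ∧ ¬ Disjoint e S).card
        ≤ (k + 1 + (r - 2) * (k + 1).choose 2) * n.choose (r - 3) :=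
      le_trans (bad_count r hr E hunif u v huv S huS hvS)
        (Nat.mul_le_mul_right _ hScard)
    have hgood : ∃ e ∈ E, u ∈ e ∧ v ∈ e ∧ Disjoint e S := by
      have hlt2 : (E.filter fun e => u ∈ e ∧ v ∈ e ∧ ¬ Disjoint e S).card
          < (E.filter fun e => u ∈ e ∧ v ∈ e).card :=
        lt_of_le_of_lt hbad (hcod p.1 p.2 hp)
      have hsub : (E.filter fun e => u ∈ e ∧ v ∈ e ∧ ¬ Disjoint e S)
          ⊆ E.filter fun e => u ∈ e ∧ v ∈ e := by
        intro e he; simp only [mem_filter] at he ⊢; exact ⟨he.1, he.2.1, he.2.2.1⟩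
      have : ¬ (E.filter fun e => u ∈ e ∧ v ∈ e)
          ⊆ (E.filter fun e => u ∈ e ∧ v ∈ e ∧ ¬ Disjoint e S) :=
        fun h => absurd (card_le_card h) (not_le.mpr hlt2)
      obtain ⟨e, heA, heB⟩ := Finset.not_subset.mp this
      simp only [mem_filter] at heA heB
      refine ⟨e, heA.1, heA.2.1, heA.2.2, ?_⟩
      by_contra hnd
      exact heB ⟨heA.1, heA.2.1, heA.2.2, hnd⟩
    obtain ⟨e, heE, hue, hve, hdisj⟩ := hgood
    refine ⟨fun q => if q = p then e else G q, ?_, ?_⟩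
    · intro q hq
      rcases Finset.mem_insert.mp hq with h | h
      · simp only [if_pos h]
        rw [h]
        refine ⟨heE, hunif e heE, ?_⟩
        apply Finset.Subset.antisymm
        · intro x hx
          rw [mem_inter] at hx
          by_contra hxuv
          have : x ∈ S := mem_union_left _ (mem_sdiff.mpr ⟨hx.2, hxuv⟩)
          exact (Finset.disjoint_left.mp hdisj hx.1) this
        · intro x hx
          simp only [mem_insert, mem_singleton] at hx
          rcases hx with h | h <;> subst h
          · exact mem_inter.mpr ⟨hue, huC⟩
          · exact mem_inter.mpr ⟨hve, hvC⟩
      · have hne : q ≠ p := fun hh => hpP (hh ▸ h)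
        simp only [if_neg hne]
        exact hG1 q h
    · intro q hq q' hq' hqq'
      rcases Finset.mem_insert.mp hq with h | h <;> rcases Finset.mem_insert.mp hq' with h' | h'
      · exact absurd (h.trans h'.symm) hqq'
      · have hne : q' ≠ p := fun hh => hpP (hh ▸ h')
        simp only [if_pos h, if_neg hne]
        intro x hx
        rw [mem_inter] at hx
        by_contra hxC
        have : x ∈ S := mem_union_right _ (mem_biUnion.mpr ⟨q', h', mem_sdiff.mpr ⟨hx.2, hxC⟩⟩)
        exact (Finset.disjoint_left.mp hdisj hx.1) this
      · have hne : q ≠ p := fun hh => hpP (hh ▸ h)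
        simp only [if_pos h', if_neg hne]
        intro x hx
        rw [mem_inter] at hx
        by_contra hxC
        have : x ∈ S := mem_union_right _ (mem_biUnion.mpr ⟨q, h, mem_sdiff.mpr ⟨hx.1, hxC⟩⟩)
        exact (Finset.disjoint_left.mp hdisj hx.2) this
      · have hne : q ≠ p := fun hh => hpP (hh ▸ h)
        have hne' : q' ≠ p := fun hh => hpP (hh ▸ h')
        simp only [if_neg hne, if_neg hne']
        exact hG2 q h q' h' hqq'

/-- If `H` is `H_{k+1}^{(r)}`-free (`k ≥ r ≥ 3`) and `H₁` is obtained from `H` by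
removing every edge containing a pair of vertices of codegree at most
`d = (k + 1 + (r-2)·C(k+1,2))·C(n,r-3)`, then `H₁` is `𝒦_{k+1}^{(r)}`-free. -/
theorem reduced_KFam_free (k r : ℕ) (hr : 3 ≤ r) (hrk : r ≤ k) (n : ℕ)
    (E : Finset (Finset (Fin n))) (hunif : ∀ e ∈ E, e.card = r)
    (hfree : ¬ ContainsExpandedClique r k E) :
    ¬ ContainsKFam (k + 1)
      (E.filter fun e => ¬ ∃ u ∈ e, ∃ v ∈ e, u ≠ v ∧
        codeg E u v ≤ (k + 1 + (r - 2) * (k + 1).choose 2) * n.choose (r - 3)) := by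
  classical
  intro hcon
  obtain ⟨C, hC, hpair⟩ := hcon
  -- enumerate the core
  set c : Fin (k + 1) ↪ Fin n :=
    ⟨fun i => ((C.orderIsoOfFin hC) i : Fin n),
     fun i j h => (C.orderIsoOfFin hC).injective (Subtype.ext h)⟩ with hc
  have hmemC : ∀ i, c i ∈ C := fun i => ((C.orderIsoOfFin hC) i).2
  -- codegree is large for all core pairs
  have hcod : ∀ i j : Fin (k + 1), i < j →
      (k + 1 + (r - 2) * (k + 1).choose 2) * n.choose (r - 3) < codeg E (c i) (c j) := by
    intro i j hij
    have hne : c i ≠ c j := fun h => absurd (c.injective h) (ne_of_lt hij)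
    obtain ⟨e, he, hue, hve⟩ := hpair (c i) (hmemC i) (c j) (hmemC j) hne
    rw [mem_filter] at he
    obtain ⟨heE, hno⟩ := he
    push_neg at hno
    exact hno (c i) hue (c j) hve hne
  obtain ⟨G, hG1, hG2⟩ := build_expansion k r hr E hunif c hcod
    ((Finset.univ ×ˢ Finset.univ).filter fun p => p.1 < p.2)
    (fun p hp => (mem_filter.mp hp).2)
  apply hfree
  refine ⟨c, fun i j => G (i, j), ?_, ?_⟩
  · intro i j hij
    exact hG1 (i, j) (mem_filter.mpr ⟨mem_product.mpr ⟨mem_univ _, mem_univ _⟩, hij⟩)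
  · intro i j i' j' hij hij' hne
    exact hG2 (i, j) (mem_filter.mpr ⟨mem_product.mpr ⟨mem_univ _, mem_univ _⟩, hij⟩)
      (i', j') (mem_filter.mpr ⟨mem_product.mpr ⟨mem_univ _, mem_univ _⟩, hij'⟩) hne
end

section
/- Let k ≥ r ≥ 3 and let H be an F_{k+1}^{(r)}-free r-graph on n vertices. Set d = (k + 1 + (r−2)·C(k+1,2))·C(n,r−3), and let H₂ be the spanning subgraph of H obtained by removing every edge that contains a pair of vertices whose codegree in H is at most d. Then H₂ is ℱ_{k+1}^{(r)}-free. -/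
open Finset

/-!
Let `C` be the core of a member of `ℱ_{k+1}` in `H₂` and `e₀ ⊆ C` an edge of `H₂`. Every pair of
`C` lies in an edge of `H₂`, so it has codegree more than `d` in `H`. Now choose, pair by pair, for
each pair of `C` not inside `e₀` an edge of `H` through it that avoids the rest of `C` and all
vertices outside `C` used so far. At most `k + 1 + (r - 2)·C(k+1,2)` vertices are forbidden, and
each forbidden vertex lies together with the pair in at most `C(n, r-3)` edges, so such an edge
exists. These edges together with `e₀` form a copy of `F_{k+1}^{(r)}` in `H`.
-/

namespace Hypergraph

variable {α : Type*} [DecidableEq α] {r : ℕ} {E : Finset (Finset α)}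

theorem card_filter_superset_le [Fintype α] (hunif : ∀ e ∈ E, #e = r) (T : Finset α) :
    #{e ∈ E | T ⊆ e} ≤ (Fintype.card α).choose (r - #T) := by
  rw [← card_univ, ← card_powersetCard]
  refine card_le_card_of_injOn (· \ T) (fun e he => ?_) (fun e₁ he₁ e₂ he₂ h => ?_)
  · obtain ⟨heE, hTe⟩ := mem_filter.1 he
    simp [card_sdiff_of_subset hTe, hunif e heE]
  · rw [← sdiff_union_of_subset (mem_filter.1 he₁).2, ← sdiff_union_of_subset (mem_filter.1 he₂).2]
    exact congrArg (· ∪ T) h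

theorem exists_superset_disjoint [Fintype α] (hunif : ∀ e ∈ E, #e = r) {p B : Finset α}
    (hpB : Disjoint p B)
    (hB : #B * (Fintype.card α).choose (r - #p - 1) < #{e ∈ E | p ⊆ e}) :
    ∃ e ∈ E, p ⊆ e ∧ Disjoint B e := by
  by_contra! h
  have hcover : {e ∈ E | p ⊆ e} ⊆ B.biUnion fun w => {e ∈ E | insert w p ⊆ e} := by
    intro e he
    obtain ⟨heE, hpe⟩ := mem_filter.1 he
    obtain ⟨w, hwB, hwe⟩ := not_disjoint_iff.1 (h e heE hpe)
    exact mem_biUnion.2 ⟨w, hwB, mem_filter.2 ⟨heE, insert_subset hwe hpe⟩⟩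
  have hbound : ∀ w ∈ B, #{e ∈ E | insert w p ⊆ e} ≤ (Fintype.card α).choose (r - #p - 1) := by
    intro w hw
    have hwp : w ∉ p := disjoint_right.1 hpB hw
    simpa [card_insert_of_notMem hwp, Nat.sub_sub] using card_filter_superset_le hunif (insert w p)
  have := (card_le_card hcover).trans (card_biUnion_le.trans (sum_le_card_nsmul _ _ _ hbound))
  simp only [smul_eq_mul] at this
  omega

/-- For a pair `p = {i, j}` of the core `C`, the edge `G p` is the edge `E_{ij} ∪ {i, j}` of an
expanded clique on `C`, with `E_{ij} = G p \ C`. -/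
def IsCoreExpansion (E : Finset (Finset α)) (C : Finset α) (S : Finset (Finset α))
    (G : Finset α → Finset α) : Prop :=
  (∀ p ∈ S, G p ∈ E ∧ G p ∩ C = p) ∧ ∀ p ∈ S, ∀ q ∈ S, p ≠ q → G p ∩ G q ⊆ C

variable {C : Finset α} {S : Finset (Finset α)} {G : Finset α → Finset α}

theorem IsCoreExpansion.card_outside_core_le (hunif : ∀ e ∈ E, #e = r)
    (hG : IsCoreExpansion E C S G) (hS : ∀ p ∈ S, #p = 2) :
    #(S.biUnion fun q => G q \ C) ≤ #S * (r - 2) := by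
  refine card_biUnion_le.trans (sum_le_card_nsmul _ _ _ fun q hq => ?_)
  obtain ⟨hqE, hqC⟩ := hG.1 q hq
  rw [card_sdiff, inter_comm, hqC, hunif _ hqE, hS q hq]

theorem IsCoreExpansion.insert (hG : IsCoreExpansion E C S G)
    {p e : Finset α} (hpS : p ∉ S) (heE : e ∈ E) (hpe : p ⊆ e) (hpC : p ⊆ C)
    (he : Disjoint ((C \ p) ∪ S.biUnion fun q => G q \ C) e) :
    IsCoreExpansion E C (insert p S) (Function.update G p e) := by
  have hupdate : ∀ q ∈ S, Function.update G p e q = G q := fun q hq =>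
    Function.update_of_ne (ne_of_mem_of_not_mem hq hpS) _ _
  have heC : e ∩ C = p := by
    refine Subset.antisymm (fun x hx => ?_) (subset_inter hpe hpC)
    by_contra hxp
    exact disjoint_left.1 he (mem_union_left _ (mem_sdiff.2 ⟨(mem_inter.1 hx).2, hxp⟩))
      (mem_inter.1 hx).1
  have heG : ∀ q ∈ S, e ∩ G q ⊆ C := by
    intro q hq x hx
    by_contra hxC
    exact disjoint_left.1 he (mem_union_right _ (mem_biUnion.2 ⟨q, hq, mem_sdiff.2
      ⟨(mem_inter.1 hx).2, hxC⟩⟩)) (mem_inter.1 hx).1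
  refine ⟨fun q hq => ?_, fun q₁ hq₁ q₂ hq₂ hne => ?_⟩
  · rcases mem_insert.1 hq with rfl | hq
    · simpa using ⟨heE, heC⟩
    · rw [hupdate q hq]
      exact hG.1 q hq
  · rcases mem_insert.1 hq₁ with rfl | h₁ <;> rcases mem_insert.1 hq₂ with rfl | h₂
    · exact absurd rfl hne
    · simpa [hupdate q₂ h₂] using heG q₂ h₂
    · simpa [hupdate q₁ h₁, inter_comm] using heG q₁ h₁
    · simpa [hupdate q₁ h₁, hupdate q₂ h₂] using hG.2 q₁ h₁ q₂ h₂ hne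

theorem exists_isCoreExpansion [Fintype α] (hunif : ∀ e ∈ E, #e = r) (C : Finset α)
    (S : Finset (Finset α)) (hS : ∀ p ∈ S, p ⊆ C ∧ #p = 2) {d : ℕ}
    (hd : (#C + #S * (r - 2)) * (Fintype.card α).choose (r - 3) ≤ d)
    (hcod : ∀ p ∈ S, d < #{e ∈ E | p ⊆ e}) :
    ∃ G, IsCoreExpansion E C S G := by
  induction S using Finset.induction_on with
  | empty => exact ⟨fun _ => ∅, by simp [IsCoreExpansion]⟩
  | insert p S hpS ih =>
    obtain ⟨hpC, hp2⟩ := hS p (mem_insert_self p S)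
    have hdS : (#C + #S * (r - 2)) * (Fintype.card α).choose (r - 3) ≤ d := by
      refine le_trans (Nat.mul_le_mul_right _ ?_) hd
      rw [card_insert_of_notMem hpS]
      gcongr
      omega
    obtain ⟨G, hG⟩ := ih (fun q hq => hS q (mem_insert_of_mem hq)) hdS
      (fun q hq => hcod q (mem_insert_of_mem hq))
    set B := (C \ p) ∪ S.biUnion fun q => G q \ C
    have hB : #B ≤ #C + #S * (r - 2) :=
      (card_union_le _ _).trans (add_le_add (card_le_card sdiff_subset)
        (hG.card_outside_core_le hunif fun q hq => (hS q (mem_insert_of_mem hq)).2))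
    have hpB : Disjoint p B := by
      refine disjoint_union_right.2 ⟨disjoint_sdiff, (disjoint_biUnion_right _ _ _).2 fun q _ => ?_⟩
      exact disjoint_of_subset_left hpC disjoint_sdiff
    obtain ⟨e, heE, hpe, he⟩ := exists_superset_disjoint hunif hpB <| by
      rw [hp2]
      exact lt_of_le_of_lt ((Nat.mul_le_mul_right _ hB).trans hdS) (hcod p (mem_insert_self p S))
    exact ⟨_, hG.insert hpS heE hpe hpC he⟩

end Hypergraph

theorem Finset.exists_fin_embedding_prefix {α : Type*} {s t : Finset α} {m N : ℕ}
    (hst : s ⊆ t) (hs : #s = m) (ht : #t = N) :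
    ∃ c : Fin N ↪ α, univ.map c = t ∧ ∀ i, c i ∈ s ↔ (i : ℕ) < m := by
  classical
  have hmN : m ≤ N := hs ▸ ht ▸ card_le_card hst
  have hs' : Fintype.card {x : t // (x : α) ∈ s} = m := by
    rw [Fintype.card_congr (Equiv.subtypeSubtypeEquivSubtype fun hx => hst hx), Fintype.card_coe,
      hs]
  have hlow : Fintype.card {i : Fin N // (i : ℕ) < m} = Fintype.card {x : t // (x : α) ∈ s} := by
    rw [hs', Fintype.card_subtype, Fin.card_filter_val_lt, min_eq_right hmN]
  have hhigh : Fintype.card {i : Fin N // ¬ (i : ℕ) < m} =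
      Fintype.card {x : t // (x : α) ∉ s} := by
    rw [Fintype.card_subtype_compl, Fintype.card_subtype_compl, hlow, Fintype.card_fin,
      Fintype.card_coe, ht]
  let f : Fin N ≃ t := (Equiv.sumCompl _).symm.trans
    ((Equiv.sumCongr (Fintype.equivOfCardEq hlow) (Fintype.equivOfCardEq hhigh)).trans
      (Equiv.sumCompl _))
  refine ⟨f.toEmbedding.trans (Function.Embedding.subtype _), ?_, fun i => ?_⟩
  · refine eq_of_subset_of_card_le (fun x hx => ?_)
      (by rw [card_map, card_univ, Fintype.card_fin, ht])
    obtain ⟨i, -, rfl⟩ := mem_map.1 hx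
    exact (f i).2
  by_cases hi : (i : ℕ) < m
  · simpa [f, hi] using (Fintype.equivOfCardEq hlow ⟨i, hi⟩).2
  · simpa [f, hi] using (Fintype.equivOfCardEq hhigh ⟨i, hi⟩).2

theorem Finset.pair_eq_pair_of_lt {ι α : Type*} [LinearOrder ι] [DecidableEq α] {c : ι → α}
    (hc : Function.Injective c) {i j i' j' : ι} (hij : i < j) (hij' : i' < j')
    (h : ({c i, c j} : Finset α) = {c i', c j'}) : (i, j) = (i', j') := by
  have := congrArg ((↑) : Finset α → Set α) h
  simp only [coe_pair, Set.pair_eq_pair_iff, hc.eq_iff] at this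
  rcases this with ⟨rfl, rfl⟩ | ⟨rfl, rfl⟩
  · rfl
  · order

theorem codeg_eq_card_filter_pair_subset {n : ℕ} (E : Finset (Finset (Fin n))) (u v : Fin n) :
    codeg E u v = #{e ∈ E | {u, v} ⊆ e} := by
  simp [codeg, insert_subset_iff]

theorem containsGenFan_of_isCoreExpansion {n r k : ℕ} {E : Finset (Finset (Fin n))}
    (hunif : ∀ e ∈ E, #e = r) {C e₀ : Finset (Fin n)} (he₀ : e₀ ∈ E) (he₀C : e₀ ⊆ C)
    (c : Fin (k + 1) ↪ Fin n) (hcore : univ.map c = C) (hce₀ : ∀ i, c i ∈ e₀ ↔ (i : ℕ) < r)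
    {G : Finset (Fin n) → Finset (Fin n)}
    (hG : Hypergraph.IsCoreExpansion E C {p ∈ C.powersetCard 2 | ¬ p ⊆ e₀} G) :
    ContainsGenFan r k E := by
  rw [map_eq_image] at hcore
  have hmemC : ∀ i, c i ∈ C := fun i => hcore ▸ mem_image_of_mem c (mem_univ i)
  have hpair : ∀ i j : Fin (k + 1), i < j → ¬((i : ℕ) < r ∧ (j : ℕ) < r) →
      {c i, c j} ∈ {p ∈ C.powersetCard 2 | ¬ p ⊆ e₀} := by
    intro i j hij hr
    refine mem_filter.2 ⟨mem_powersetCard.2 ⟨?_, card_pair (c.injective.ne hij.ne)⟩, ?_⟩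
    · exact insert_subset (hmemC i) (singleton_subset_iff.2 (hmemC j))
    · simpa [insert_subset_iff, hce₀] using hr
  refine ⟨c, fun i j => G {c i, c j}, ?_, fun i j hij hr => ?_, ?_⟩
  · convert he₀
    ext x
    simp only [mem_image, mem_filter, mem_univ, true_and]
    refine ⟨fun ⟨i, hi, hix⟩ => hix ▸ (hce₀ i).2 hi, fun hx => ?_⟩
    obtain ⟨i, -, rfl⟩ := mem_image.1 (hcore ▸ he₀C hx)
    exact ⟨i, (hce₀ i).1 hx, rfl⟩
  · obtain ⟨hGE, hGC⟩ := hG.1 _ (hpair i j hij hr)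
    exact ⟨hGE, hunif _ hGE, by rw [hcore, hGC]⟩
  · intro i j i' j' hij hij' hne hr hr'
    rw [hcore]
    exact hG.2 _ (hpair i j hij hr) _ (hpair i' j' hij' hr') fun h =>
      hne (pair_eq_pair_of_lt c.injective hij hij' h)

theorem reduced_FFam_free_general (k r : ℕ) (n : ℕ)
    (E : Finset (Finset (Fin n))) (hunif : ∀ e ∈ E, e.card = r)
    (hfree : ¬ ContainsGenFan r k E) :
    ¬ ContainsFFam (k + 1)
      (E.filter fun e => ¬ ∃ u ∈ e, ∃ v ∈ e, u ≠ v ∧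
        codeg E u v ≤ (k + 1 + (r - 2) * (k + 1).choose 2) * n.choose (r - 3)) := by
  rintro ⟨C, hC, ⟨e₀, he₀, he₀C⟩, hcov⟩
  set d := (k + 1 + (r - 2) * (k + 1).choose 2) * n.choose (r - 3) with hd_def
  have hcod : ∀ u ∈ C, ∀ v ∈ C, u ≠ v → d < #{e ∈ E | {u, v} ⊆ e} := by
    intro u hu v hv huv
    obtain ⟨e, he, hue, hve⟩ := hcov u hu v hv huv
    rw [← codeg_eq_card_filter_pair_subset]
    exact not_le.1 fun h => (mem_filter.1 he).2 ⟨u, hue, v, hve, huv, h⟩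
  set S := {p ∈ C.powersetCard 2 | ¬ p ⊆ e₀}
  have hS : ∀ p ∈ S, p ⊆ C ∧ #p = 2 := fun p hp => mem_powersetCard.1 (mem_filter.1 hp).1
  have hd : (#C + #S * (r - 2)) * (Fintype.card (Fin n)).choose (r - 3) ≤ d := by
    rw [Fintype.card_fin, hC, hd_def, mul_comm (r - 2)]
    gcongr
    simpa [hC] using card_le_card (filter_subset _ (C.powersetCard 2))
  obtain ⟨G, hG⟩ := Hypergraph.exists_isCoreExpansion hunif C S hS hd fun p hp => by
    obtain ⟨u, v, huv, rfl⟩ := card_eq_two.1 (hS p hp).2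
    exact hcod u ((hS _ hp).1 (mem_insert_self _ _)) v ((hS _ hp).1 (by simp)) huv
  obtain ⟨c, hcore, hce₀⟩ :=
    exists_fin_embedding_prefix he₀C (hunif e₀ (mem_filter.1 he₀).1) hC
  exact hfree (containsGenFan_of_isCoreExpansion hunif (mem_filter.1 he₀).1 he₀C c hcore hce₀
    hG)

/-- If `H` is `F_{k+1}^{(r)}`-free (`k ≥ r ≥ 3`) and `H₂` is obtained from `H` by
removing every edge containing a pair of vertices of codegree at most
`d = (k + 1 + (r-2)·C(k+1,2))·C(n,r-3)`, then `H₂` is `ℱ_{k+1}^{(r)}`-free. -/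
theorem reduced_FFam_free (k r : ℕ) (hr : 3 ≤ r) (hrk : r ≤ k) (n : ℕ)
    (E : Finset (Finset (Fin n))) (hunif : ∀ e ∈ E, e.card = r)
    (hfree : ¬ ContainsGenFan r k E) :
    ¬ ContainsFFam (k + 1)
      (E.filter fun e => ¬ ∃ u ∈ e, ∃ v ∈ e, u ≠ v ∧
        codeg E u v ≤ (k + 1 + (r - 2) * (k + 1).choose 2) * n.choose (r - 3)) :=
  reduced_FFam_free_general k r n E hunif hfree
end
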